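/- arXiv:2006.03188 — 2 statements merged into one kernel-verified Lean document; each statement's English description precedes it below -/
import Mathlib

section
/- The graph G (root r joined to path w_0,...,w_48 with v_i adjacent to w_{i-1} and w_i) is uniquely 3-colorable: up to permutation of colors, there is exactly one proper 3-coloring, and in it all vertices v_1,...,v_48 receive the same color as r. -/
/-- Vertices of the graph `G`: the root `r` (left), the path vertices `w₀, …, w₄₈`
(middle, indexed by `Fin 49`), and the vertices `v₁, …, v₄₈` (right, indexed by `Fin 48`,
where index `j` stands for `v_{j+1}`). -/
abbrev V98 : Type := Unit ⊕ Fin 49 ⊕ Fin 48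

/-- One-directional edge relation for `G`:  `r ~ wᵢ` for all `i`;  `wᵢ ~ w_{i+1}`;  and
`v_{j+1} ~ w_j`, `v_{j+1} ~ w_{j+1}`. -/
def Rel98 : V98 → V98 → Prop
  | Sum.inl _, Sum.inr (Sum.inl _) => True
  | Sum.inr (Sum.inl i), Sum.inr (Sum.inl j) => (j : ℕ) = (i : ℕ) + 1
  | Sum.inr (Sum.inr j), Sum.inr (Sum.inl i) => (i : ℕ) = (j : ℕ) ∨ (i : ℕ) = (j : ℕ) + 1
  | _, _ => False

/-- The outerplanar 2-tree `G` on `98` vertices from the paper:  the root `r` is adjacent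
to every `wᵢ`, the `wᵢ` form a path, and each `v_{j+1}` is adjacent to `w_j` and `w_{j+1}`. -/
def G98 : SimpleGraph V98 where
  Adj u v := Rel98 u v ∨ Rel98 v u
  symm := by constructor; intro u v h; exact h.symm
  loopless := by
    constructor
    rintro (u | i | j) h <;> rcases h with h | h <;> simp only [Rel98] at h <;> omega

/-!
Each `v_j`, like `r`, is adjacent to both ends of the edge `w_{j-1} w_j`; with three colours
both must take the one colour missing on that edge. Likewise the colours of `r` and `w_0` fix
the colour of `w_1`, then of `w_2`, and so on along the path, so a proper 3-colouring is
determined by the two distinct colours it gives to `r` and `w_0`, and any two such pairs are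
related by a permutation of the colours.
-/

theorem Fintype.eq_of_ne_of_ne_of_card_eq_three {α : Type*} [Fintype α] (h3 : Fintype.card α = 3)
    {a b x y : α} (hab : a ≠ b) (hxa : x ≠ a) (hxb : x ≠ b) (hya : y ≠ a) (hyb : y ≠ b) :
    x = y := by
  classical
  by_contra hxy
  have h4 : ({a, b, x, y} : Finset α).card = 4 := by
    rw [Finset.card_insert_of_notMem, Finset.card_insert_of_notMem, Finset.card_pair hxy] <;>
      simp [*, Ne.symm hxa, Ne.symm hya, Ne.symm hxb, Ne.symm hyb]
  have := Finset.card_le_univ ({a, b, x, y} : Finset α)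
  omega

theorem Equiv.Perm.exists_apply_eq_and_apply_eq {α : Type*} [DecidableEq α] {a b a' b' : α}
    (hab : a ≠ b) (hab' : a' ≠ b') : ∃ σ : Equiv.Perm α, σ a = a' ∧ σ b = b' := by
  have hb : Equiv.swap a a' b ≠ a' := by
    rw [Ne, Equiv.swap_apply_eq_iff, Equiv.swap_apply_right]
    exact hab.symm
  refine ⟨Equiv.swap (Equiv.swap a a' b) b' * Equiv.swap a a', ?_, ?_⟩
  · simp only [Equiv.Perm.mul_apply, Equiv.swap_apply_left]
    exact Equiv.swap_apply_of_ne_of_ne hb.symm hab'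
  · simp only [Equiv.Perm.mul_apply, Equiv.swap_apply_left]

namespace SimpleGraph.Coloring

variable {V α : Type*} [Fintype α] {G : SimpleGraph V} {a b x y : V}

theorem eq_of_adj_of_adj_of_card_eq_three (h3 : Fintype.card α = 3) (C : G.Coloring α)
    (hab : G.Adj a b) (hxa : G.Adj x a) (hxb : G.Adj x b) (hya : G.Adj y a)
    (hyb : G.Adj y b) : C x = C y :=
  Fintype.eq_of_ne_of_ne_of_card_eq_three h3 (C.valid hab) (C.valid hxa) (C.valid hxb) (C.valid hya)
    (C.valid hyb)

theorem apply_eq_perm_apply_of_adj_of_card_eq_three (h3 : Fintype.card α = 3)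
    (C C' : G.Coloring α) (σ : Equiv.Perm α) (ha : C' a = σ (C a)) (hb : C' b = σ (C b))
    (hab : G.Adj a b) (hxa : G.Adj x a) (hxb : G.Adj x b) : C' x = σ (C x) := by
  have hσ : ∀ {u w : V}, G.Adj u w → σ (C u) ≠ σ (C w) := fun h => σ.injective.ne (C.valid h)
  refine Fintype.eq_of_ne_of_ne_of_card_eq_three h3 (hσ hab) ?_ ?_ (hσ hxa) (hσ hxb)
  · rw [← ha]; exact C'.valid hxa
  · rw [← hb]; exact C'.valid hxb

end SimpleGraph.Coloring

namespace G98

abbrev r : V98 := Sum.inl ()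

abbrev w (i : Fin 49) : V98 := Sum.inr (Sum.inl i)

abbrev v (j : Fin 48) : V98 := Sum.inr (Sum.inr j)

theorem adj_r_w (i : Fin 49) : G98.Adj r (w i) := Or.inl trivial

theorem adj_w_castSucc_w_succ (j : Fin 48) : G98.Adj (w j.castSucc) (w j.succ) := Or.inl rfl

theorem adj_v_w_castSucc (j : Fin 48) : G98.Adj (v j) (w j.castSucc) := Or.inl (Or.inl rfl)

theorem adj_v_w_succ (j : Fin 48) : G98.Adj (v j) (w j.succ) := Or.inl (Or.inr rfl)

end G98

open G98 SimpleGraph.Coloring in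
/-- The graph `G` is uniquely `3`-colorable: in every proper
`3`-coloring all the vertices `v₁, …, v₄₈` receive the same color as the root `r`, and
any two proper `3`-colorings differ only by a permutation of the colors. -/
theorem G98_uniquely_three_colorable :
    (∀ c : G98.Coloring (Fin 3), ∀ j : Fin 48, c (Sum.inr (Sum.inr j)) = c (Sum.inl ())) ∧
      ∀ c c' : G98.Coloring (Fin 3), ∃ σ : Equiv.Perm (Fin 3),
        ∀ v : V98, c' v = σ (c v) := by
  have h3 : Fintype.card (Fin 3) = 3 := Fintype.card_fin 3
  have hv : ∀ (c : G98.Coloring (Fin 3)) j, c (v j) = c r := fun c j =>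
    eq_of_adj_of_adj_of_card_eq_three h3 c (adj_w_castSucc_w_succ j) (adj_v_w_castSucc j)
      (adj_v_w_succ j) (adj_r_w _) (adj_r_w _)
  refine ⟨hv, fun c c' => ?_⟩
  obtain ⟨σ, hr, hw₀⟩ :=
    Equiv.Perm.exists_apply_eq_and_apply_eq (c.valid (adj_r_w 0)) (c'.valid (adj_r_w 0))
  have hw : ∀ i, c' (w i) = σ (c (w i)) := Fin.induction hw₀.symm fun j ih =>
    apply_eq_perm_apply_of_adj_of_card_eq_three h3 c c' σ hr.symm ih (adj_r_w _)
      (adj_r_w _).symm (adj_w_castSucc_w_succ j).symm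
  refine ⟨σ, ?_⟩
  rintro (⟨⟩ | i | j)
  · exact hr.symm
  · exact hw i
  · exact apply_eq_perm_apply_of_adj_of_card_eq_three h3 c c' σ (hw _) (hw _)
      (adj_w_castSucc_w_succ j) (adj_v_w_castSucc j) (adj_v_w_succ j)
end

section
/- In the marking game (connected or not) on a connected graph G of treedepth k ≥ 3 witnessed by rooted tree T with root r ∈ V(G), if Alice follows the ancestor-marking strategy (first mark r; whenever Bob marks v, mark the least-level unmarked available ancestor of v, else any least-level available vertex), then at every point of the game and for every unmarked vertex v, the number of descendant-neighbors of v marked by Bob is at most the number of marked ancestors of v. -/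
/-- A rooted tree on vertex set `V`, given by a parent function together with a
depth function certifying acyclicity.  The root is the unique vertex of depth `0`. -/
structure RTree (V : Type*) where
  parent : V → V
  root : V
  depth : V → ℕ
  depth_root : depth root = 0
  depth_parent : ∀ v, v ≠ root → depth (parent v) + 1 = depth v
  parent_root : parent root = root

namespace RTree

variable {V : Type*} (T : RTree V)

/-- `u` is a strict ancestor of `v` in `T`. -/
def IsStrictAncestor (u v : V) : Prop :=
  u ≠ v ∧ ∃ n : ℕ, T.parent^[n] v = u

/-- The closure of a rooted tree: `u ~ v` iff one is a strict ancestor of the other. -/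
def closure : SimpleGraph V where
  Adj u v := T.IsStrictAncestor u v ∨ T.IsStrictAncestor v u
  symm := ⟨by intro u v h; tauto⟩
  loopless := ⟨by rintro v (⟨h, -⟩ | ⟨h, -⟩) <;> exact h rfl⟩

/-- `T` has height at most `k`: every root-to-leaf path has at most `k` vertices. -/
def HeightLE (k : ℕ) : Prop := ∀ v, T.depth v < k

/-- `v` is a leaf of `T` (it has no children). -/
def IsLeaf (v : V) : Prop := ∀ u, T.parent u = v → u = v

end RTree

/-- A graph `G` has treedepth at most `k` if it embeds into the closure of a rooted
tree of height at most `k` (whose vertex set may be larger than that of `G`). -/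
def TreedepthLE {W : Type} (G : SimpleGraph W) (k : ℕ) : Prop :=
  ∃ (V : Type) (T : RTree V) (f : W ↪ V),
    T.HeightLE k ∧ ∀ a b, G.Adj a b → T.closure.Adj (f a) (f b)

section Strategy

variable {V : Type} (G : SimpleGraph V) (T : RTree V)

/-- A vertex is available at a state `L` if it is unmarked and adjacent to a marked
vertex. -/
def Available (L : List V) (u : V) : Prop := u ∉ L ∧ ∃ w ∈ L, G.Adj w u

/-- Alice's ancestor-marking strategy: in the state `L` in which Bob has just marked `b`,
Alice may answer with `a` iff either `a` is an unmarked available ancestor of `b` of least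
level, or no unmarked available ancestor of `b` exists and `a` is an available vertex of
least level. -/
def AliceMoveOK (L : List V) (b a : V) : Prop :=
  (T.IsStrictAncestor a b ∧ Available G L a ∧
    ∀ u, T.IsStrictAncestor u b → Available G L u → T.depth a ≤ T.depth u) ∨
  ((∀ u, T.IsStrictAncestor u b → ¬ Available G L u) ∧ Available G L a ∧
    ∀ u, Available G L u → T.depth a ≤ T.depth u)

/-- The chronological list `L` of marked vertices (earliest first) is a play of the
marking game in which no vertex is marked twice, Alice (who moves at even positions,
starting the game) first marks the root, and afterwards always follows the
ancestor-marking strategy.  Bob (who moves at odd positions) may mark any unmarked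
vertex. -/
def FollowsStrategy (L : List V) : Prop :=
  L.Nodup ∧
  (∀ h : 0 < L.length, L.get ⟨0, h⟩ = T.root) ∧
  ∀ i : ℕ, 1 ≤ i → ∀ h : 2 * i < L.length,
    AliceMoveOK G T (L.take (2 * i)) (L.get ⟨2 * i - 1, by omega⟩) (L.get ⟨2 * i, h⟩)

open Classical in
/-- The number of marked strict ancestors of `v` at the state `L`. -/
noncomputable def markedAncestors (L : List V) (v : V) : ℕ :=
  L.countP fun u => decide (T.IsStrictAncestor u v)

open Classical in
/-- The number of descendant-neighbours of `v` that were marked by Bob at the state `L`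
(Bob's moves are the ones at odd chronological positions). -/
noncomputable def bobDescCount (L : List V) (v : V) : ℕ :=
  (((L.zipIdx.map Prod.swap).filter fun p => decide (p.1 % 2 = 1)).map Prod.snd).countP
    fun u => decide (G.Adj v u ∧ T.IsStrictAncestor v u)

end Strategy
/-!
After each of Alice's moves the inequality is strict for every unmarked `v`, so Bob's
next move cannot break it. When Bob marks a descendant-neighbour `b` of `v`, the vertex
`v` becomes an available ancestor of `b`; Alice then marks an available ancestor of `b`
of least level, and since the ancestors of `b` form a chain, that vertex is `v` itself or
an ancestor of `v`. Either way strictness is restored.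
-/

namespace RTree

variable {V : Type} (T : RTree V)

theorem eq_root_of_depth_eq_zero {v : V} (h : T.depth v = 0) : v = T.root := by
  by_contra hv
  have := T.depth_parent v hv
  omega

theorem iterate_parent_depth (v : V) : T.parent^[T.depth v] v = T.root := by
  induction h : T.depth v generalizing v with
  | zero => exact T.eq_root_of_depth_eq_zero h
  | succ n ih =>
    have hv : v ≠ T.root := by rintro rfl; simp [T.depth_root] at h
    rw [Function.iterate_succ_apply]
    exact ih _ (by have := T.depth_parent v hv; omega)

theorem isStrictAncestor_root {v : V} (hv : v ≠ T.root) : T.IsStrictAncestor T.root v :=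
  ⟨hv.symm, T.depth v, T.iterate_parent_depth v⟩

theorem depth_parent_le (v : V) : T.depth (T.parent v) ≤ T.depth v := by
  by_cases hv : v = T.root
  · rw [hv, T.parent_root]
  · have := T.depth_parent v hv; omega

theorem depth_iterate_parent_le (n : ℕ) (v : V) : T.depth (T.parent^[n] v) ≤ T.depth v := by
  induction n with
  | zero => rfl
  | succ n ih =>
    rw [Function.iterate_succ_apply']
    exact (T.depth_parent_le _).trans ih

theorem depth_iterate_parent_lt {n : ℕ} {v : V} (h : T.parent^[n] v ≠ v) :
    T.depth (T.parent^[n] v) < T.depth v := by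
  obtain _ | n := n
  · exact absurd rfl h
  have hv : v ≠ T.root := by
    rintro rfl
    exact h (Function.iterate_fixed T.parent_root _)
  rw [Function.iterate_succ_apply]
  have := T.depth_parent v hv
  have := T.depth_iterate_parent_le n (T.parent v)
  omega

/-- The strict ancestors of a vertex form a chain ordered by depth. -/
theorem isStrictAncestor_of_depth_le {a v u : V} (ha : T.IsStrictAncestor a u)
    (hv : T.IsStrictAncestor v u) (hd : T.depth a ≤ T.depth v) (hne : a ≠ v) :
    T.IsStrictAncestor a v := by
  obtain ⟨-, m, rfl⟩ := ha
  obtain ⟨-, n, rfl⟩ := hv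
  refine ⟨hne, m - n, ?_⟩
  rcases le_or_gt n m with hnm | hmn
  · rw [← Function.iterate_add_apply, Nat.sub_add_cancel hnm]
  · have hva : T.parent^[n] u = T.parent^[n - m] (T.parent^[m] u) := by
      rw [← Function.iterate_add_apply, Nat.sub_add_cancel hmn.le]
    rw [hva] at hd hne
    exact absurd hd (not_le.mpr (T.depth_iterate_parent_lt (Ne.symm hne)))

end RTree

section Game

open Classical

variable {V : Type} {G : SimpleGraph V} {T : RTree V}

theorem markedAncestors_concat (L : List V) (x v : V) :
    markedAncestors T (L ++ [x]) v =
      markedAncestors T L v + if T.IsStrictAncestor x v then 1 else 0 := by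
  by_cases h : T.IsStrictAncestor x v <;> simp [markedAncestors, h]

theorem bobDescCount_nil (v : V) : bobDescCount G T [] v = 0 := by
  simp [bobDescCount]

theorem bobDescCount_concat (L : List V) (x v : V) :
    bobDescCount G T (L ++ [x]) v = bobDescCount G T L v +
      if L.length % 2 = 1 ∧ G.Adj v x ∧ T.IsStrictAncestor v x then 1 else 0 := by
  unfold bobDescCount
  rw [List.zipIdx_append, List.map_append, List.filter_append, List.map_append,
    List.countP_append]
  by_cases hodd : L.length % 2 = 1 <;> by_cases hx : G.Adj v x ∧ T.IsStrictAncestor v x <;>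
    simp [hodd, hx]

theorem FollowsStrategy.of_append {L M : List V} (h : FollowsStrategy G T (L ++ M)) :
    FollowsStrategy G T L := by
  obtain ⟨hnodup, hroot, hmoves⟩ := h
  refine ⟨hnodup.sublist (List.sublist_append_left L M), fun hL => ?_, fun i hi hiL => ?_⟩
  · simpa [List.getElem_append_left hL] using hroot (by simp; omega)
  · have := hmoves i hi (by simp; omega)
    simp only [List.get_eq_getElem] at this ⊢
    rwa [List.take_append_of_le_length (by omega), List.getElem_append_left hiL,
      List.getElem_append_left (by omega)] at this

theorem FollowsStrategy.eq_root {x : V} {L : List V} (h : FollowsStrategy G T (x :: L)) :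
    x = T.root := by
  simpa using h.2.1 (by simp)

theorem FollowsStrategy.aliceMoveOK {M : List V} {b x : V}
    (h : FollowsStrategy G T (M ++ [b, x])) (hM : M.length % 2 = 1) :
    AliceMoveOK G T (M ++ [b]) b x := by
  obtain ⟨i, hi⟩ : ∃ i, M.length = 2 * i + 1 := ⟨M.length / 2, by omega⟩
  have := h.2.2 (i + 1) (by omega) (by simp; omega)
  have h2 : 2 * (i + 1) = M.length + 1 := by omega
  simp only [List.get_eq_getElem, h2] at this
  have htake : (M ++ [b, x]).take (M.length + 1) = M ++ [b] := by
    rw [show M ++ [b, x] = (M ++ [b]) ++ [x] by simp]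
    exact List.take_left' (by simp)
  simpa [htake] using this

theorem AliceMoveOK.isStrictAncestor_of_adj {M : List V} {b x v : V}
    (hA : AliceMoveOK G T M b x) (hvM : v ∉ M) (hbM : b ∈ M) (hadj : G.Adj v b)
    (hvb : T.IsStrictAncestor v b) (hxv : x ≠ v) : T.IsStrictAncestor x v := by
  have hav : Available G M v := ⟨hvM, b, hbM, hadj.symm⟩
  rcases hA with ⟨hxb, -, hleast⟩ | ⟨hnone, -⟩
  · exact T.isStrictAncestor_of_depth_le hxb hvb (hleast v hvb hav) hxv
  · exact absurd hav (hnone v hvb)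

theorem FollowsStrategy.bobDescCount_lt_markedAncestors {L : List V}
    (hL : FollowsStrategy G T L) (hodd : L.length % 2 = 1) {v : V} (hv : v ∉ L) :
    bobDescCount G T L v < markedAncestors T L v := by
  obtain ⟨n, hn⟩ : ∃ n, L.length = 2 * n + 1 := ⟨L.length / 2, by omega⟩
  induction n generalizing L with
  | zero =>
    obtain ⟨r, rfl⟩ := List.length_eq_one_iff.mp hn
    have hvr : v ≠ T.root := by rintro rfl; simp [hL.eq_root] at hv
    simp [bobDescCount, markedAncestors, hL.eq_root, T.isStrictAncestor_root hvr]
  | succ n ih =>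
    obtain ⟨M, b, x, rfl, hM⟩ : ∃ M b x, L = M ++ [b, x] ∧ M.length = 2 * n + 1 := by
      obtain ⟨b, x, hbx⟩ :=
        List.length_eq_two.mp (by simp [hn]; omega : (L.drop (2 * n + 1)).length = 2)
      exact ⟨L.take (2 * n + 1), b, x, by rw [← hbx, List.take_append_drop], by simp [hn]⟩
    have hA := hL.aliceMoveOK (by omega)
    have ihM := ih hL.of_append (by omega) (fun h => hv (List.mem_append_left _ h)) hM
    rw [show M ++ [b, x] = M ++ [b] ++ [x] by simp] at hv ⊢
    rw [bobDescCount_concat, bobDescCount_concat, markedAncestors_concat, markedAncestors_concat]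
    by_cases hbob : G.Adj v b ∧ T.IsStrictAncestor v b
    · have hxv := hA.isStrictAncestor_of_adj (fun h => hv (List.mem_append_left _ h))
        (by simp) hbob.1 hbob.2 (by rintro rfl; simp at hv)
      simp only [hbob, hxv, hM, List.length_append, List.length_singleton]
      split_ifs <;> omega
    · simp only [hbob, hM, List.length_append, List.length_singleton, and_false,
        if_false]
      split_ifs <;> omega

end Game

theorem ancestorStrategy_invariant_general
    {V : Type} (G : SimpleGraph V) (T : RTree V)
    (L : List V) (hL : FollowsStrategy G T L) :
    ∀ v : V, v ∉ L → bobDescCount G T L v ≤ markedAncestors T L v := by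
  intro v hv
  rcases Nat.mod_two_eq_zero_or_one L.length with heven | hodd
  · obtain rfl | ⟨M, b, rfl⟩ := L.eq_nil_or_concat'
    · simp [bobDescCount_nil]
    have hM : M.length % 2 = 1 := by simp at heven; omega
    have hlt := hL.of_append.bobDescCount_lt_markedAncestors hM
      fun h => hv (List.mem_append_left _ h)
    rw [bobDescCount_concat, markedAncestors_concat]
    split_ifs <;> omega
  · exact (hL.bobDescCount_lt_markedAncestors hodd hv).le

/-- Let `G` be a connected graph of treedepth `k ≥ 3`, witnessed by a
rooted tree `T` of height `k` whose closure contains `G`.  If Alice follows the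
ancestor-marking strategy in the marking game on `G` (connected or not), then at every
point of the game and for every unmarked vertex `v`, the number of descendant-neighbours
of `v` marked by Bob is at most the number of marked ancestors of `v`. -/
theorem ancestorStrategy_invariant
    {V : Type} (G : SimpleGraph V) (T : RTree V) (k : ℕ) (hk : 3 ≤ k)
    (hheight : T.HeightLE k) (hconn : G.Connected) (hG : G ≤ T.closure)
    (L : List V) (hL : FollowsStrategy G T L) :
    ∀ v : V, v ∉ L → bobDescCount G T L v ≤ markedAncestors T L v :=
  ancestorStrategy_invariant_general G T L hL
end
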